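/- arXiv:2312.15312 — 3 statements merged into one kernel-verified Lean document; each statement's English description precedes it below -/
import Mathlib

section
/- Let −φ: ℝᵈ → ℝᵈ be a monotone map with φ(z*) = 0, and let z(t) be a differentiable solution of dz/dt = φ(z). Then the Lyapunov function V(z) = ‖φ(z)‖² + (1/2)‖z − z*‖² is nonincreasing along trajectories provided the Jacobian ∇φ(z) is negative semidefinite (zᵀ∇φ(z)z ≤ 0 for all z) at every point; that is, dV(z(t))/dt ≤ 0. -/
open scoped RealInnerProductSpace

theorem HasDerivAt.lyapunov_comp {E : Type*} [NormedAddCommGroup E] [InnerProductSpace ℝ E]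
    {φ : E → E} {z : ℝ → E} {zstar v : E} {t : ℝ}
    (hφ : DifferentiableAt ℝ φ (z t)) (hz : HasDerivAt z v t) :
    HasDerivAt (fun s => ‖φ (z s)‖ ^ 2 + (1 / 2) * ‖z s - zstar‖ ^ 2)
      (2 * ⟪φ (z t), fderiv ℝ φ (z t) v⟫ + ⟪z t - zstar, v⟫) t := by
  have hV := (hφ.hasFDerivAt.comp_hasDerivAt t hz).norm_sq.add
    ((hz.sub_const zstar).norm_sq.const_mul (1 / 2))
  exact hV.congr_deriv (by simp only [Function.comp_apply]; ring)

theorem lyapunov_nonincreasing (d : ℕ)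
    (φ : EuclideanSpace ℝ (Fin d) → EuclideanSpace ℝ (Fin d))
    (hφ : ContDiff ℝ 1 φ)
    (zstar : EuclideanSpace ℝ (Fin d))
    (heq : φ zstar = 0)
    (hmono : ∀ x y : EuclideanSpace ℝ (Fin d),
      inner (x - y) (φ x - φ y) (𝕜 := ℝ) ≤ 0)
    (hjac : ∀ x v : EuclideanSpace ℝ (Fin d),
      inner v (fderiv ℝ φ x v) (𝕜 := ℝ) ≤ 0)
    (z : ℝ → EuclideanSpace ℝ (Fin d))
    (hz : ∀ t : ℝ, HasDerivAt z (φ (z t)) t) :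
    ∀ (t D : ℝ),
      HasDerivAt (fun s => ‖φ (z s)‖ ^ 2 + (1 / 2) * ‖z s - zstar‖ ^ 2) D t →
      D ≤ 0 := by
  intro t D hD
  rw [hD.unique ((hz t).lyapunov_comp (hφ.differentiable one_ne_zero (z t)))]
  have hjac_flow : ⟪φ (z t), fderiv ℝ φ (z t) (φ (z t))⟫ ≤ 0 := hjac (z t) (φ (z t))
  have hmono_zstar : ⟪z t - zstar, φ (z t)⟫ ≤ 0 := by
    simpa only [heq, sub_zero] using hmono (z t) zstar
  linarith
end

section
/- Fix μ ∈ ℝⁿ, a positive semidefinite matrix Σ ∈ ℝⁿˣⁿ, and ξ, ρ₁, ρ₂ ≥ 0. The function φ(τ, x) = (√(eˣ/(1−eˣ))·√ρ₂ + √ρ₁)·‖Σ^{1/2}τ‖ − τᵀμ + ξ, defined for τ ∈ ℝⁿ and x < 0, is biconvex: for each fixed x < 0 it is convex in τ, and for each fixed τ it is convex in x on (−∞, 0). -/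
open Matrix

/-- The square root of a positive semidefinite matrix, as defined in Mathlib of December 2024
(removed since): `U * diagonal (√ ∘ eigenvalues) * U⋆`. -/
noncomputable def Matrix.PosSemidef.sqrt {n : Type*} [Fintype n] [DecidableEq n] {𝕜 : Type*}
    [RCLike 𝕜] [PartialOrder 𝕜] [StarOrderedRing 𝕜] {A : Matrix n n 𝕜} (hA : PosSemidef A) : Matrix n n 𝕜 :=
  hA.1.eigenvectorUnitary.1 * diagonal ((↑) ∘ (Real.sqrt ∘ hA.1.eigenvalues)) *
  (star hA.1.eigenvectorUnitary : Matrix n n 𝕜)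

noncomputable def phiCC (n : ℕ) (μ : Fin n → ℝ) (Sig : Matrix (Fin n) (Fin n) ℝ)
    (hSig : Sig.PosSemidef) (ξ ρ₁ ρ₂ : ℝ) (τ : Fin n → ℝ) (x : ℝ) : ℝ :=
  (Real.sqrt (Real.exp x / (1 - Real.exp x)) * Real.sqrt ρ₂ + Real.sqrt ρ₁) *
      ‖(WithLp.equiv 2 (Fin n → ℝ)).symm (hSig.sqrt.mulVec τ)‖ - τ ⬝ᵥ μ + ξ

/-! In `τ` the function is a nonnegative multiple of the norm of a linear image of `τ`, minus a
linear form, plus a constant. In `x` only the factor `√(eˣ / (1 - eˣ))` varies, and on `x < 0` it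
equals `exp ((x - log (1 - eˣ)) / 2)`: `log (1 - eˣ)` is concave (log is concave and increasing,
`1 - eˣ` is concave and positive), so the exponent is convex, and so is its image under the convex
increasing `exp`. -/

open Real Set

section Composition

variable {𝕜 E β α : Type*} [Semiring 𝕜] [PartialOrder 𝕜] [AddCommMonoid E] [SMul 𝕜 E]
  [AddCommMonoid β] [PartialOrder β] [SMul 𝕜 β] [AddCommMonoid α] [PartialOrder α] [SMul 𝕜 α]
  {s : Set E} {t : Set β} {f : E → β} {g : β → α}

theorem ConvexOn.comp_of_mapsTo (hg : ConvexOn 𝕜 t g) (hf : ConvexOn 𝕜 s f) (hst : MapsTo f s t)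
    (hg' : MonotoneOn g t) : ConvexOn 𝕜 s (g ∘ f) :=
  ⟨hf.1, fun _ hx _ hy _ _ ha hb hab =>
    (hg' (hst (hf.1 hx hy ha hb hab)) (hg.1 (hst hx) (hst hy) ha hb hab)
      (hf.2 hx hy ha hb hab)).trans (hg.2 (hst hx) (hst hy) ha hb hab)⟩

theorem ConcaveOn.comp_of_mapsTo (hg : ConcaveOn 𝕜 t g) (hf : ConcaveOn 𝕜 s f)
    (hst : MapsTo f s t) (hg' : MonotoneOn g t) : ConcaveOn 𝕜 s (g ∘ f) :=
  ⟨hf.1, fun _ hx _ hy _ _ ha hb hab =>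
    (hg.2 (hst hx) (hst hy) ha hb hab).trans
      (hg' (hg.1 (hst hx) (hst hy) ha hb hab) (hst (hf.1 hx hy ha hb hab)) (hf.2 hx hy ha hb hab))⟩

end Composition

lemma convexOn_mul_norm_linearMap_sub_dotProduct {m F : Type*} [Fintype m]
    [SeminormedAddCommGroup F] [NormedSpace ℝ F] (L : (m → ℝ) →ₗ[ℝ] F) {c : ℝ} (hc : 0 ≤ c)
    (μ : m → ℝ) (ξ : ℝ) : ConvexOn ℝ univ fun τ => c * ‖L τ‖ - τ ⬝ᵥ μ + ξ :=
  ((((convexOn_univ_norm.comp_linearMap L).smul hc).sub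
    (((dotProductBilin ℝ ℝ).flip μ).concaveOn convex_univ))).add_const ξ

lemma one_sub_exp_pos {x : ℝ} (hx : x < 0) : 0 < 1 - exp x :=
  sub_pos.2 (exp_lt_one_iff.2 hx)

lemma concaveOn_log_one_sub_exp : ConcaveOn ℝ (Iio 0) fun x => log (1 - exp x) :=
  strictConcaveOn_log_Ioi.concaveOn.comp_of_mapsTo
    ((concaveOn_const 1 (convex_Iio 0)).sub (convexOn_exp.subset (subset_univ _) (convex_Iio 0)))
    (fun _ hx => one_sub_exp_pos hx) strictMonoOn_log.monotoneOn

lemma sqrt_exp_div_one_sub_exp {x : ℝ} (hx : x < 0) :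
    √(exp x / (1 - exp x)) = exp ((x - log (1 - exp x)) / 2) := by
  rw [← exp_log (one_sub_exp_pos hx), ← exp_sub, sqrt_eq_iff_mul_self_eq_of_pos (exp_pos _),
    ← exp_add, exp_log (one_sub_exp_pos hx)]
  ring_nf

lemma convexOn_sqrt_exp_div_one_sub_exp :
    ConvexOn ℝ (Iio 0) fun x => √(exp x / (1 - exp x)) := by
  have hexponent : ConvexOn ℝ (Iio 0) fun x => (x - log (1 - exp x)) / 2 :=
    (((convexOn_id (convex_Iio 0)).sub concaveOn_log_one_sub_exp).smul
      (by norm_num : (0 : ℝ) ≤ 1 / 2)).congr fun x _ => by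
        simp only [Pi.sub_apply, id, smul_eq_mul]
        ring
  exact (convexOn_exp.comp_of_mapsTo hexponent (mapsTo_univ _ _) (exp_monotone.monotoneOn _)).congr
    fun x hx => (sqrt_exp_div_one_sub_exp hx).symm

theorem phiCC_biconvex_general (n : ℕ) (μ : Fin n → ℝ) (Sig : Matrix (Fin n) (Fin n) ℝ)
    (hSig : Sig.PosSemidef) (ξ ρ₁ ρ₂ : ℝ) :
    (∀ x : ℝ, x < 0 →
      ConvexOn ℝ Set.univ (fun τ : Fin n → ℝ => phiCC n μ Sig hSig ξ ρ₁ ρ₂ τ x)) ∧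
    (∀ τ : Fin n → ℝ,
      ConvexOn ℝ (Set.Iio (0 : ℝ)) (fun x : ℝ => phiCC n μ Sig hSig ξ ρ₁ ρ₂ τ x)) := by
  let L : (Fin n → ℝ) →ₗ[ℝ] EuclideanSpace ℝ (Fin n) :=
    (WithLp.linearEquiv 2 ℝ (Fin n → ℝ)).symm.toLinearMap ∘ₗ hSig.sqrt.mulVecLin
  refine ⟨fun x _ => convexOn_mul_norm_linearMap_sub_dotProduct L (by positivity) μ ξ,
    fun τ => ?_⟩
  have := (convexOn_sqrt_exp_div_one_sub_exp.smul (by positivity : 0 ≤ √ρ₂ * ‖L τ‖)).add_const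
    (√ρ₁ * ‖L τ‖ - τ ⬝ᵥ μ + ξ)
  refine this.congr fun x _ => ?_
  simp only [Pi.add_apply, smul_eq_mul]
  change _ = (_ * _ + _) * ‖L τ‖ - _ + _
  ring

theorem phiCC_biconvex (n : ℕ) (μ : Fin n → ℝ) (Sig : Matrix (Fin n) (Fin n) ℝ)
    (hSig : Sig.PosSemidef) (ξ ρ₁ ρ₂ : ℝ) (hξ : 0 ≤ ξ) (hρ₁ : 0 ≤ ρ₁) (hρ₂ : 0 ≤ ρ₂) :
    (∀ x : ℝ, x < 0 →
      ConvexOn ℝ Set.univ (fun τ : Fin n → ℝ => phiCC n μ Sig hSig ξ ρ₁ ρ₂ τ x)) ∧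
    (∀ τ : Fin n → ℝ,
      ConvexOn ℝ (Set.Iio (0 : ℝ)) (fun x : ℝ => phiCC n μ Sig hSig ξ ρ₁ ρ₂ τ x)) :=
  phiCC_biconvex_general n μ Sig hSig ξ ρ₁ ρ₂
end

section
/- Let z(t) solve the autonomous ODE dz/dt = φ(z) where φ is continuously differentiable and its Jacobian is everywhere negative semidefinite (quadratic-form sense). If z* is an equilibrium (φ(z*)=0) and V(z) = ‖φ(z)‖² + (1/2)‖z − z*‖², then for any trajectory, V(z(t)) ≥ (1/2)‖z(t) − z*‖², so trajectories remain bounded: ‖z(t) − z*‖ ≤ √(2V(z(0))) for all t ≥ 0. -/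
/-!
Along a trajectory, `V = ‖φ z‖² + ½‖z - z*‖²` has derivative `2⟪φ, Dφ φ⟫ + ⟪z - z*, φ z - φ z*⟫`.
The first term is nonpositive by the Jacobian hypothesis, and so is the second, because integrating
that hypothesis along the segment from `z*` to `z` makes `-φ` monotone. Hence `V` is nonincreasing,
and `½‖z t - z*‖² ≤ V (z t) ≤ V (z 0)`.
-/

open scoped RealInnerProductSpace

variable {E : Type*} [NormedAddCommGroup E]

noncomputable def lyapunov (φ : E → E) (zstar x : E) : ℝ :=
  ‖φ x‖ ^ 2 + (1 / 2) * ‖x - zstar‖ ^ 2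

theorem half_norm_sub_sq_le_lyapunov (φ : E → E) (zstar x : E) :
    (1 / 2) * ‖x - zstar‖ ^ 2 ≤ lyapunov φ zstar x :=
  le_add_of_nonneg_left (sq_nonneg _)

theorem norm_sub_le_sqrt_two_mul_lyapunov (φ : E → E) (zstar x : E) :
    ‖x - zstar‖ ≤ √(2 * lyapunov φ zstar x) :=
  Real.le_sqrt_of_sq_le (by linarith [half_norm_sub_sq_le_lyapunov φ zstar x])

variable [InnerProductSpace ℝ E]

theorem inner_sub_map_sub_nonpos_of_inner_fderiv_nonpos {φ : E → E} (hφ : Differentiable ℝ φ)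
    (hjac : ∀ x v, ⟪v, fderiv ℝ φ x v⟫ ≤ 0) (x y : E) : ⟪x - y, φ x - φ y⟫ ≤ 0 := by
  have hg : ∀ s : ℝ, HasDerivAt (fun s => ⟪x - y, φ (AffineMap.lineMap y x s)⟫)
      ⟪x - y, fderiv ℝ φ (AffineMap.lineMap y x s) (x - y)⟫ s := fun s =>
    (hasDerivAt_const s (x - y)).inner ℝ
      ((hφ _).hasFDerivAt.comp_hasDerivAt s AffineMap.hasDerivAt_lineMap) |>.congr_deriv
      (by simp)
  have hsegment := antitone_of_hasDerivAt_nonpos hg (fun s => hjac _ _) zero_le_one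
  simpa [inner_sub_right] using hsegment

theorem hasDerivAt_lyapunov_comp {φ : E → E} (hφ : Differentiable ℝ φ) (zstar : E)
    {z : ℝ → E} {t : ℝ} (hz : HasDerivAt z (φ (z t)) t) :
    HasDerivAt (fun s => lyapunov φ zstar (z s))
      (2 * ⟪φ (z t), fderiv ℝ φ (z t) (φ (z t))⟫ + ⟪z t - zstar, φ (z t)⟫) t := by
  have hφz := (hφ (z t)).hasFDerivAt.comp_hasDerivAt t hz
  exact (hφz.norm_sq.add ((hz.sub_const zstar).norm_sq.const_mul (1 / 2))).congr_deriv
    (by simp only [Function.comp_apply]; ring)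

theorem antitone_lyapunov_comp {φ : E → E} (hφ : Differentiable ℝ φ)
    (hjac : ∀ x v, ⟪v, fderiv ℝ φ x v⟫ ≤ 0) {zstar : E} (heq : φ zstar = 0)
    {z : ℝ → E} (hz : ∀ t, HasDerivAt z (φ (z t)) t) :
    Antitone fun t => lyapunov φ zstar (z t) := by
  refine antitone_of_hasDerivAt_nonpos (fun t => hasDerivAt_lyapunov_comp hφ zstar (hz t))
    fun t => ?_
  rw [Pi.zero_apply]
  have hdissip := hjac (z t) (φ (z t))
  have hmono := inner_sub_map_sub_nonpos_of_inner_fderiv_nonpos hφ hjac (z t) zstar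
  rw [heq, sub_zero] at hmono
  linarith

theorem trajectories_bounded (d : ℕ)
    (φ : EuclideanSpace ℝ (Fin d) → EuclideanSpace ℝ (Fin d))
    (hφ : ContDiff ℝ 1 φ)
    (hjac : ∀ x v : EuclideanSpace ℝ (Fin d),
      inner v (fderiv ℝ φ x v) (𝕜 := ℝ) ≤ 0)
    (zstar : EuclideanSpace ℝ (Fin d)) (heq : φ zstar = 0)
    (z : ℝ → EuclideanSpace ℝ (Fin d))
    (hz : ∀ t : ℝ, HasDerivAt z (φ (z t)) t) :
    (∀ t : ℝ, (1 / 2) * ‖z t - zstar‖ ^ 2 ≤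
        ‖φ (z t)‖ ^ 2 + (1 / 2) * ‖z t - zstar‖ ^ 2) ∧
    (∀ t : ℝ, 0 ≤ t →
      ‖z t - zstar‖ ≤ Real.sqrt (2 * (‖φ (z 0)‖ ^ 2 + (1 / 2) * ‖z 0 - zstar‖ ^ 2))) := by
  have hdiff : Differentiable ℝ φ := hφ.differentiable one_ne_zero
  refine ⟨fun t => half_norm_sub_sq_le_lyapunov φ zstar (z t), fun t ht => ?_⟩
  calc ‖z t - zstar‖ ≤ √(2 * lyapunov φ zstar (z t)) :=
        norm_sub_le_sqrt_two_mul_lyapunov φ zstar _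
    _ ≤ √(2 * lyapunov φ zstar (z 0)) := by
      gcongr
      exact antitone_lyapunov_comp hdiff hjac heq hz ht
end
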